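/- Let n ≥ 1, β ∈ (0,1), a > 0, and let v ∈ ℝⁿ be a unit vector. Define the symmetric n×n matrix Z := a(I + (β−2) v⊗v) and set τ := 1/(2a). Then I − τZ is invertible, (I − τZ)^{−1} Z = 2a(I − 2((2−β)/(3−β)) v⊗v), and ⟨(I − τZ)^{−1} Z v, v⟩ = 2a(β−1)/(3−β) < 0. -/

import Mathlib

open Set Real Matrix

noncomputable section

/-- The matrix `Z := a (I + (β-2) v ⊗ v)` appearing in the Ishii–Lions doubling argument. -/
def Zmat (n : ℕ) (β a : ℝ) (v : Fin n → ℝ) : Matrix (Fin n) (Fin n) ℝ :=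
  a • ((1 : Matrix (Fin n) (Fin n) ℝ) + (β - 2) • Matrix.vecMulVec v v)

/-!
With `P = v ⊗ v`, which is idempotent because `|v| = 1`, all matrices involved lie in the
commutative algebra spanned by `I` and `P`, where
`(cI + dP)(c'I + d'P) = cc' I + (cd' + dc' + dd') P`. In particular `cI + dP` is invertible as soon
as `c ≠ 0` and `c + d ≠ 0`. Since `I - τZ = ½ (I + (2 - β) P)`, everything reduces to arithmetic
on the two coefficients, and `⟨(cI + dP) v, v⟩ = c + d`.
-/

section IdempotentPencil

variable {𝕜 A : Type*} [Field 𝕜] [Ring A] [Algebra 𝕜 A] {P : A}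

theorem IsIdempotentElem.smul_one_add_smul_mul (hP : IsIdempotentElem P) (a b c d : 𝕜) :
    (a • 1 + b • P) * (c • 1 + d • P) = (a * c) • (1 : A) + (a * d + b * c + b * d) • P := by
  simp only [add_mul, mul_add, smul_mul_smul_comm, one_mul, mul_one, hP.eq, add_smul]
  abel

theorem IsIdempotentElem.smul_one_add_smul_mul_inv (hP : IsIdempotentElem P) {c d : 𝕜}
    (hc : c ≠ 0) (hcd : c + d ≠ 0) :
    (c • 1 + d • P) * (c⁻¹ • 1 + (-(d / (c * (c + d)))) • P) = 1 := by
  rw [hP.smul_one_add_smul_mul, mul_inv_cancel₀ hc, one_smul, add_eq_left]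
  convert zero_smul 𝕜 P using 2
  field_simp
  ring

end IdempotentPencil

namespace Matrix

variable {ι : Type*} [Fintype ι]

theorem isIdempotentElem_vecMulVec_self {R : Type*} [CommSemiring R] {v : ι → R}
    (hv : v ⬝ᵥ v = 1) : IsIdempotentElem (vecMulVec v v) := by
  rw [IsIdempotentElem, vecMulVec_mul_vecMulVec, hv, one_smul]

variable [DecidableEq ι]

theorem smul_one_add_smul_vecMulVec_self_mulVec_dotProduct {R : Type*} [CommRing R] {v : ι → R}
    (hv : v ⬝ᵥ v = 1) (c d : R) : ((c • 1 + d • vecMulVec v v) *ᵥ v) ⬝ᵥ v = c + d := by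
  simp [add_mulVec, smul_mulVec, vecMulVec_mulVec, hv, add_dotProduct, smul_dotProduct]

variable {𝕜 : Type*} [Field 𝕜] {P : Matrix ι ι 𝕜}

theorem isUnit_smul_one_add_smul_of_isIdempotentElem (hP : IsIdempotentElem P) {c d : 𝕜}
    (hc : c ≠ 0) (hcd : c + d ≠ 0) : IsUnit (c • 1 + d • P) :=
  (isUnit_iff_isUnit_det _).2 (isUnit_det_of_right_inverse (hP.smul_one_add_smul_mul_inv hc hcd))

theorem inv_smul_one_add_smul_of_isIdempotentElem (hP : IsIdempotentElem P) {c d : 𝕜}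
    (hc : c ≠ 0) (hcd : c + d ≠ 0) :
    (c • 1 + d • P)⁻¹ = c⁻¹ • 1 + (-(d / (c * (c + d)))) • P :=
  inv_eq_right_inv (hP.smul_one_add_smul_mul_inv hc hcd)

end Matrix

theorem sup_convolution_matrix_general
    (n : ℕ) (β a : ℝ) (hβ : β ∈ Set.Ioo (0 : ℝ) 1) (ha : 0 < a)
    (v : Fin n → ℝ) (hv : ∑ i, v i ^ 2 = 1) :
    IsUnit (1 - (1 / (2 * a)) • Zmat n β a v) ∧
    (1 - (1 / (2 * a)) • Zmat n β a v)⁻¹ * Zmat n β a v =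
      (2 * a) • ((1 : Matrix (Fin n) (Fin n) ℝ)
        - (2 * ((2 - β) / (3 - β))) • Matrix.vecMulVec v v) ∧
    (((1 - (1 / (2 * a)) • Zmat n β a v)⁻¹ * Zmat n β a v).mulVec v) ⬝ᵥ v =
      2 * a * (β - 1) / (3 - β) ∧
    2 * a * (β - 1) / (3 - β) < 0 := by
  obtain ⟨-, hβ1⟩ := hβ
  have h3β : (3 : ℝ) - β ≠ 0 := by linarith
  have hvv : v ⬝ᵥ v = 1 := by simpa [dotProduct, sq] using hv
  have hP := isIdempotentElem_vecMulVec_self hvv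
  set P := vecMulVec v v
  have hZ : Zmat n β a v = a • 1 + (a * (β - 2)) • P := by rw [Zmat, smul_add, smul_smul]
  have hA : 1 - (1 / (2 * a)) • Zmat n β a v = (1 / 2 : ℝ) • 1 + ((2 - β) / 2) • P := by
    rw [hZ]
    match_scalars <;> field_simp <;> ring
  have hc : (1 / 2 : ℝ) ≠ 0 := by norm_num
  have hcd : (1 / 2 : ℝ) + (2 - β) / 2 ≠ 0 := by linarith
  have hinv : (1 - (1 / (2 * a)) • Zmat n β a v)⁻¹ =
      (2 : ℝ) • 1 + (-(2 * ((2 - β) / (3 - β)))) • P := by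
    rw [hA, inv_smul_one_add_smul_of_isIdempotentElem hP hc hcd,
      show (1 / 2 : ℝ) * (1 / 2 + (2 - β) / 2) = (3 - β) / 4 by ring]
    congr 2
    · norm_num
    · field_simp; ring
  have hmain : (1 - (1 / (2 * a)) • Zmat n β a v)⁻¹ * Zmat n β a v =
      (2 * a) • 1 + (-(2 * a * (2 * ((2 - β) / (3 - β))))) • P := by
    rw [hinv, hZ, hP.smul_one_add_smul_mul]
    congr 2
    field_simp
    ring
  refine ⟨hA ▸ isUnit_smul_one_add_smul_of_isIdempotentElem hP hc hcd, ?_, ?_, ?_⟩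
  · rw [hmain, smul_sub, smul_smul, neg_smul, ← sub_eq_add_neg]
  · rw [hmain, smul_one_add_smul_vecMulVec_self_mulVec_dotProduct hvv]
    field_simp; ring
  · exact div_neg_of_neg_of_pos (by nlinarith) (by linarith)

/-- **Sup-convolution regularization of the radial Hessian model.** For `β ∈ (0,1)`, `a > 0`,
`v` a unit vector, `Z := a(I + (β-2) v⊗v)` and `τ := 1/(2a)`: `I - τZ` is invertible,
`(I - τZ)⁻¹ Z = 2a (I - 2((2-β)/(3-β)) v⊗v)`, and
`⟨(I - τZ)⁻¹ Z v, v⟩ = 2a(β-1)/(3-β) < 0`. -/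
theorem sup_convolution_matrix
    (n : ℕ) (hn : 1 ≤ n) (β a : ℝ) (hβ : β ∈ Set.Ioo (0 : ℝ) 1) (ha : 0 < a)
    (v : Fin n → ℝ) (hv : ∑ i, v i ^ 2 = 1) :
    IsUnit (1 - (1 / (2 * a)) • Zmat n β a v) ∧
    (1 - (1 / (2 * a)) • Zmat n β a v)⁻¹ * Zmat n β a v =
      (2 * a) • ((1 : Matrix (Fin n) (Fin n) ℝ)
        - (2 * ((2 - β) / (3 - β))) • Matrix.vecMulVec v v) ∧
    (((1 - (1 / (2 * a)) • Zmat n β a v)⁻¹ * Zmat n β a v).mulVec v) ⬝ᵥ v =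
      2 * a * (β - 1) / (3 - β) ∧
    2 * a * (β - 1) / (3 - β) < 0 :=
  sup_convolution_matrix_general n β a hβ ha v hv
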